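/- For m = 3, the subgraph H_i of S_n □ K_{1,3} induced by the edge sets a_i ∪ b_i ∪ b'_i ∪ c_i ∪ t_i ∪ t_{i+1} ∪ t_{i-1} is homeomorphic to the complete tripartite graph K_{1,3,3}. -/

import Mathlib

open SimpleGraph

/-- A drawing of a simple graph in the plane: vertices are placed at distinct
points, and each edge is drawn as a simple continuous arc between the points
of its endpoints, avoiding all vertex points in its interior. -/
structure Drawing {V : Type*} (G : SimpleGraph V) where
  vertexPos : V → ℝ × ℝ
  vertexPos_inj : Function.Injective vertexPos
  arc : G.edgeSet → ℝ → ℝ × ℝ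
  arc_cont : ∀ e, ContinuousOn (arc e) (Set.Icc 0 1)
  arc_inj : ∀ e, Set.InjOn (arc e) (Set.Icc 0 1)
  arc_ends : ∀ e : G.edgeSet, ∃ x y : V, (e : Sym2 V) = s(x, y) ∧
      arc e 0 = vertexPos x ∧ arc e 1 = vertexPos y
  arc_avoid : ∀ e : G.edgeSet, ∀ t ∈ Set.Ioo (0:ℝ) 1, ∀ x : V, arc e t ≠ vertexPos x

namespace Drawing

variable {V : Type*} {G : SimpleGraph V} (D : Drawing G)

/-- Ordered crossing data of a drawing: an ordered pair of distinct edges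
together with a point interior to both of their arcs.  Each unordered
crossing point is hence recorded exactly twice. -/
def crossSet : Set ((G.edgeSet × G.edgeSet) × (ℝ × ℝ)) :=
  {x | x.1.1 ≠ x.1.2 ∧
    (∃ t ∈ Set.Ioo (0:ℝ) 1, D.arc x.1.1 t = x.2) ∧
    (∃ t ∈ Set.Ioo (0:ℝ) 1, D.arc x.1.2 t = x.2)}

/-- The crossing data involving at least one edge from the edge set `A`. -/
def crossSetOn (A : Set (Sym2 V)) : Set ((G.edgeSet × G.edgeSet) × (ℝ × ℝ)) :=
  {x | x ∈ D.crossSet ∧ ((x.1.1 : Sym2 V) ∈ A ∨ (x.1.2 : Sym2 V) ∈ A)}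

/-- A crossing-free drawing. -/
def CrossingFree : Prop := D.crossSet = ∅

/-- A good drawing: any two edges meet in at most one interior point, and
edges sharing an endpoint have no common interior point. -/
def IsGood : Prop :=
  (∀ e f : G.edgeSet, {p : ℝ × ℝ | ((e, f), p) ∈ D.crossSet}.Subsingleton) ∧
  (∀ e f : G.edgeSet, (∃ v : V, v ∈ (e : Sym2 V) ∧ v ∈ (f : Sym2 V)) →
    {p : ℝ × ℝ | ((e, f), p) ∈ D.crossSet} = ∅)

end Drawing

/-- A graph is planar if it admits a crossing-free drawing in the plane. -/
def IsPlanarGraph {V : Type*} (G : SimpleGraph V) : Prop :=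
  ∃ D : Drawing G, D.CrossingFree

/-- The crossing number of a graph: the least `n` such that some drawing of
`G` has exactly `n` crossings (recall `crossSet` counts every crossing twice). -/
noncomputable def crossingNumber {V : Type*} (G : SimpleGraph V) : ℕ :=
  sInf {n : ℕ | ∃ D : Drawing G, D.crossSet.Finite ∧ D.crossSet.ncard = 2 * n}

/-- The Sunlet graph on `2n` vertices: the vertex `(i, false)` is the cycle
vertex `uᵢ`, and `(i, true)` is the pendant vertex `u'ᵢ` attached to `uᵢ`. -/
def sunlet (n : ℕ) : SimpleGraph (Fin n × Bool) :=
  SimpleGraph.fromRel (fun x y =>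
    (x.2 = false ∧ y.2 = false ∧ (y.1 : ℕ) = ((x.1 : ℕ) + 1) % n) ∨
    (x.2 = false ∧ y.2 = true ∧ x.1 = y.1))

/-- The star `K_{1,m}`: `Sum.inl 0` is the centre and `Sum.inr j` the leaves. -/
def starGraph (m : ℕ) : SimpleGraph (Fin 1 ⊕ Fin m) :=
  completeBipartiteGraph (Fin 1) (Fin m)

/-- The cycle graph on `n` vertices. -/
def cycleGraph' (n : ℕ) : SimpleGraph (Fin n) :=
  SimpleGraph.fromRel (fun x y => (y : ℕ) = ((x : ℕ) + 1) % n)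

/-- A bundled graph. -/
structure GraphB where
  V : Type
  G : SimpleGraph V

/-- The graph obtained from `G` by subdividing the edge `{a, b}` via the new
vertex `none`. -/
def subdivideEdge {V : Type*} (G : SimpleGraph V) (a b : V) : SimpleGraph (Option V) :=
  SimpleGraph.fromRel (fun x y =>
    (x = none ∧ (y = some a ∨ y = some b)) ∨
    (∃ u v : V, x = some u ∧ y = some v ∧ G.Adj u v ∧ s(u, v) ≠ s(a, b)))

/-- `B` is obtained from `A` by subdividing a single edge (up to isomorphism). -/
def SubdivStep (A B : GraphB) : Prop :=
  ∃ a b : A.V, A.G.Adj a b ∧ Nonempty (B.G ≃g subdivideEdge A.G a b)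

/-- Two graphs are homeomorphic if they are related by the equivalence closure
of single-edge subdivisions together with graph isomorphism. -/
def Homeo : GraphB → GraphB → Prop :=
  Relation.EqvGen (fun A B => SubdivStep A B ∨ Nonempty (A.G ≃g B.G))

/-- The cyclic successor of `i : Fin n`. -/
def finSucc {n : ℕ} (i : Fin n) : Fin n := i + ⟨1 % n, Nat.mod_lt 1 i.pos⟩

/-- The cyclic predecessor of `i : Fin n`. -/
def finPred {n : ℕ} (i : Fin n) : Fin n := i - ⟨1 % n, Nat.mod_lt 1 i.pos⟩

/-- The edge set `aᵢ` of `Sₙ □ K_{1,m}`: edges from column `i` to column `i+1`. -/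
def aSet (n m : ℕ) (i : Fin n) : Set (Sym2 ((Fin n × Bool) × (Fin 1 ⊕ Fin m))) :=
  {e | ∃ v : Fin 1 ⊕ Fin m, e = s(((i, false), v), ((finSucc i, false), v))}

/-- The edge set `cᵢ`: edges from column `i` to column `i-1`. -/
def cSet (n m : ℕ) (i : Fin n) : Set (Sym2 ((Fin n × Bool) × (Fin 1 ⊕ Fin m))) :=
  {e | ∃ v : Fin 1 ⊕ Fin m, e = s(((i, false), v), ((finPred i, false), v))}

/-- The edge set `bᵢ`: pendant edges from `uᵢ`-copies to `u'ᵢ`-copies. -/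
def bSet (n m : ℕ) (i : Fin n) : Set (Sym2 ((Fin n × Bool) × (Fin 1 ⊕ Fin m))) :=
  {e | ∃ v : Fin 1 ⊕ Fin m, e = s(((i, false), v), ((i, true), v))}

/-- The edge set `b'ᵢ`: the star edges in the pendant column `u'ᵢ`. -/
def bpSet (n m : ℕ) (i : Fin n) : Set (Sym2 ((Fin n × Bool) × (Fin 1 ⊕ Fin m))) :=
  {e | ∃ j : Fin m, e = s(((i, true), Sum.inl 0), ((i, true), Sum.inr j))}

/-- The edge set `tₖ`: the star edges in the cycle column `uₖ`. -/
def tSet (n m : ℕ) (k : Fin n) : Set (Sym2 ((Fin n × Bool) × (Fin 1 ⊕ Fin m))) :=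
  {e | ∃ j : Fin m, e = s(((k, false), Sum.inl 0), ((k, false), Sum.inr j))}


/-!
The closed neighbourhood of `uᵢ` in the sunlet `Sₙ` is a star `K_{1,3}` with leaves `u'ᵢ`,
`uᵢ₊₁`, `uᵢ₋₁`, and `Hᵢ` is exactly the box product of this star with `K_{1,3}`.
In `K_{1,m} □ K_{1,p}` every vertex `(leaf k, leaf j)` has degree two and lies between
`(leaf k, centre)` and `(centre, leaf j)`; suppressing these vertices leaves the complete
tripartite graph with parts `{(centre, centre)}`, `{(leaf k, centre)}`, `{(centre, leaf j)}`.
-/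

/-- The new vertex `inr s` subdivides the edge `ends s`. -/
def subdivideEdges {V S : Type*} (G : SimpleGraph V) (ends : S → Sym2 V) :
    SimpleGraph (V ⊕ S) :=
  SimpleGraph.fromRel fun
    | .inl u, .inl v => G.Adj u v ∧ s(u, v) ∉ Set.range ends
    | .inr s, .inl v => v ∈ ends s
    | _, _ => False

def Equiv.sumOption (V S : Type*) : V ⊕ Option S ≃ Option (V ⊕ S) where
  toFun
    | .inl v => some (.inl v)
    | .inr none => none
    | .inr (some s) => some (.inr s)
  invFun
    | none => .inr none
    | some (.inl v) => .inl v
    | some (.inr s) => .inr (some s)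
  left_inv := by rintro (_ | _ | _) <;> rfl
  right_inv := by rintro (_ | _ | _) <;> rfl

section Subdivision

variable {V S T : Type*} (G : SimpleGraph V)

@[simp]
theorem subdivideEdges_adj_inl_inl {ends : S → Sym2 V} {u v : V} :
    (subdivideEdges G ends).Adj (.inl u) (.inl v) ↔ G.Adj u v ∧ s(u, v) ∉ Set.range ends := by
  simp only [subdivideEdges, SimpleGraph.fromRel_adj, ne_eq, Sum.inl.injEq, Sym2.eq_swap (a := v),
    G.adj_comm v u, or_self]
  exact ⟨And.right, fun h => ⟨h.1.ne, h⟩⟩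

@[simp]
theorem subdivideEdges_adj_inr_inl {ends : S → Sym2 V} {s : S} {v : V} :
    (subdivideEdges G ends).Adj (.inr s) (.inl v) ↔ v ∈ ends s := by
  simp [subdivideEdges]

@[simp]
theorem subdivideEdges_adj_inl_inr {ends : S → Sym2 V} {s : S} {v : V} :
    (subdivideEdges G ends).Adj (.inl v) (.inr s) ↔ v ∈ ends s := by
  simp [subdivideEdges]

@[simp]
theorem subdivideEdges_adj_inr_inr {ends : S → Sym2 V} {s t : S} :
    ¬(subdivideEdges G ends).Adj (.inr s) (.inr t) := by
  simp [subdivideEdges]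

def subdivideEdgesCongr (ends : T → Sym2 V) (e : S ≃ T) :
    subdivideEdges G (ends ∘ e) ≃g subdivideEdges G ends where
  toEquiv := (Equiv.refl V).sumCongr e
  map_rel_iff' {x y} := by
    rcases x with u | s <;> rcases y with v | t <;> simp

def subdivideEdgesEmptyIso (ends : PEmpty → Sym2 V) : subdivideEdges G ends ≃g G where
  toEquiv := Equiv.sumEmpty V PEmpty
  map_rel_iff' {x y} := by
    rcases x with u | ⟨⟨⟩⟩
    rcases y with v | ⟨⟨⟩⟩
    simp

def subdivideEdgesOptionIso (ends : Option S → Sym2 V) {a b : V} (hab : ends none = s(a, b)) :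
    subdivideEdges G ends ≃g
      subdivideEdge (subdivideEdges G (ends ∘ some)) (.inl a) (.inl b) where
  toEquiv := Equiv.sumOption V S
  map_rel_iff' {x y} := by
    rcases x with u | _ | s <;> rcases y with v | _ | t <;>
      simp [subdivideEdge, Equiv.sumOption, hab, Option.exists]
    grind [SimpleGraph.adj_comm, Sym2.eq_swap, SimpleGraph.Adj.ne]

end Subdivision

theorem Homeo.of_iso {A B : GraphB} (e : A.G ≃g B.G) : Homeo A B :=
  .rel _ _ (.inr ⟨e⟩)

theorem SubdivStep.homeo {A B : GraphB} (h : SubdivStep A B) : Homeo A B :=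
  .rel _ _ (.inl h)

theorem Homeo.symm {A B : GraphB} (h : Homeo A B) : Homeo B A :=
  Relation.EqvGen.symm _ _ h

theorem Homeo.trans {A B C : GraphB} (h₁ : Homeo A B) (h₂ : Homeo B C) : Homeo A C :=
  Relation.EqvGen.trans _ _ _ h₁ h₂

theorem homeo_subdivideEdges {V S : Type} [Finite S] (G : SimpleGraph V) (ends : S → Sym2 V)
    (hadj : ∀ s, ends s ∈ G.edgeSet) (hinj : Function.Injective ends) :
    Homeo ⟨V, G⟩ ⟨V ⊕ S, subdivideEdges G ends⟩ := by
  induction S using Finite.induction_empty_option with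
  | of_equiv e ih =>
    exact (ih (ends ∘ e) (fun _ => hadj _) (hinj.comp e.injective)).trans
      (.of_iso (subdivideEdgesCongr G ends e))
  | h_empty => exact .of_iso (subdivideEdgesEmptyIso G ends).symm
  | @h_option S _ ih =>
    induction hab : ends none using Sym2.ind with | _ a b => ?_
    have hab' : (subdivideEdges G (ends ∘ some)).Adj (.inl a) (.inl b) := by
      refine (subdivideEdges_adj_inl_inl G).2 ⟨G.mem_edgeSet.1 (hab ▸ hadj none), ?_⟩
      rintro ⟨s, hs⟩
      exact Option.some_ne_none s (hinj (hs.trans hab.symm))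
    exact (ih (ends ∘ some) (fun _ => hadj _) (hinj.comp (Option.some_injective S))).trans
      (SubdivStep.homeo ⟨.inl a, .inl b, hab', ⟨subdivideEdgesOptionIso G ends hab⟩⟩)

section StarBoxStar

variable (m p : ℕ)

abbrev tripartiteParts : Fin 3 → Type := ![Fin 1, Fin m, Fin p]

def tripartiteCrossEdge (kj : Fin m × Fin p) : Sym2 ((i : Fin 3) × tripartiteParts m p i) :=
  s(⟨1, kj.1⟩, ⟨2, kj.2⟩)

def boxProdStarEquiv :
    (Fin 1 ⊕ Fin m) × (Fin 1 ⊕ Fin p) ≃ ((i : Fin 3) × tripartiteParts m p i) ⊕ (Fin m × Fin p) where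
  toFun
    | (.inl u, .inl _) => .inl ⟨0, u⟩
    | (.inr k, .inl _) => .inl ⟨1, k⟩
    | (.inl _, .inr j) => .inl ⟨2, j⟩
    | (.inr k, .inr j) => .inr (k, j)
  invFun
    | .inl ⟨0, u⟩ => (.inl u, .inl 0)
    | .inl ⟨1, k⟩ => (.inr k, .inl 0)
    | .inl ⟨2, j⟩ => (.inl 0, .inr j)
    | .inr (k, j) => (.inr k, .inr j)
  left_inv := by rintro ⟨_ | _, _ | _⟩ <;> simp [Fin.fin_one_eq_zero]
  right_inv := by rintro (⟨i, v⟩ | ⟨k, j⟩) <;> [fin_cases i <;> rfl; rfl]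

def boxProdStarIso :
    (_root_.starGraph m).boxProd (_root_.starGraph p) ≃g
      subdivideEdges (completeMultipartiteGraph (tripartiteParts m p)) (tripartiteCrossEdge m p) where
  toEquiv := boxProdStarEquiv m p
  map_rel_iff' {x y} := by
    rcases x with ⟨_ | _, _ | _⟩ <;> rcases y with ⟨_ | _, _ | _⟩ <;>
      simp [boxProdStarEquiv, _root_.starGraph, tripartiteCrossEdge, Sigma.ext_iff,
        Fin.fin_one_eq_zero, eq_comm]

theorem homeo_boxProd_starGraph :
    Homeo ⟨(Fin 1 ⊕ Fin m) × (Fin 1 ⊕ Fin p), (_root_.starGraph m).boxProd (_root_.starGraph p)⟩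
      ⟨(i : Fin 3) × ![Fin 1, Fin m, Fin p] i,
        SimpleGraph.completeMultipartiteGraph ![Fin 1, Fin m, Fin p]⟩ :=
  (Homeo.of_iso (boxProdStarIso m p)).trans <| Homeo.symm <|
    homeo_subdivideEdges _ _ (fun _ => by simp [tripartiteCrossEdge]) fun _ _ h => by
      simpa [tripartiteCrossEdge, Sym2.eq_iff, Sigma.ext_iff, Prod.ext_iff] using h

end StarBoxStar

theorem starGraph_adj_iff {m : ℕ} {a b : Fin 1 ⊕ Fin m} :
    (_root_.starGraph m).Adj a b ↔ ∃ j, s(a, b) = s(.inl 0, .inr j) := by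
  rcases a with a | a <;> rcases b with b | b <;> simp [_root_.starGraph, Fin.fin_one_eq_zero]

theorem support_starGraph {m : ℕ} (hm : 0 < m) : (_root_.starGraph m).support = Set.univ :=
  Set.eq_univ_of_forall fun
    | .inl _ => ⟨.inr ⟨0, hm⟩, by simp [_root_.starGraph]⟩
    | .inr _ => ⟨.inl 0, by simp [_root_.starGraph]⟩

namespace SimpleGraph

variable {α β γ δ : Type*} {G : SimpleGraph α} {G' : SimpleGraph β} {H : SimpleGraph γ}
  {H' : SimpleGraph δ}

def Hom.boxProdMap (f : G →g G') (g : H →g H') : G.boxProd H →g G'.boxProd H' where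
  toFun := Prod.map f g
  map_rel' {x y} h := by
    rcases boxProd_adj.1 h with ⟨h, h'⟩ | ⟨h, h'⟩
    exacts [.inl ⟨f.map_rel h, congrArg g h'⟩, .inr ⟨g.map_rel h, congrArg f h'⟩]

theorem support_boxProd_eq_univ (hG : G.support = Set.univ) :
    (G.boxProd H).support = Set.univ := by
  refine Set.eq_univ_of_forall fun ⟨a, b⟩ => ?_
  obtain ⟨a', h⟩ := hG ▸ Set.mem_univ a
  exact ⟨(a', b), boxProd_adj_left.2 h⟩

theorem nonempty_induce_support_map_iso (f : α ↪ β) (hG : G.support = Set.univ) :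
    Nonempty ((G.map f).induce (G.map f).support ≃g G) := by
  rw [support_map, hG, Set.image_univ]
  exact ⟨(Embedding.map f G).isoInduceRange.symm⟩

end SimpleGraph

section Sunlet

variable {n : ℕ}

theorem val_finSucc (i : Fin n) : (finSucc i : ℕ) = ((i : ℕ) + 1) % n := by
  rw [finSucc, Fin.val_add, Nat.add_mod_mod]

theorem val_finSucc_eq_ite (i : Fin n) :
    (finSucc i : ℕ) = if (i : ℕ) + 1 = n then 0 else (i : ℕ) + 1 := by
  rw [val_finSucc]
  split_ifs with h
  · simp [h, Nat.mod_self]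
  · exact Nat.mod_eq_of_lt (by omega)

theorem finSucc_finPred (i : Fin n) : finSucc (finPred i) = i :=
  have : NeZero n := ⟨i.pos.ne'⟩
  sub_add_cancel i _

theorem finSucc_ne_self (hn : 2 ≤ n) (i : Fin n) : finSucc i ≠ i := by
  intro h
  have := congrArg Fin.val h
  rw [val_finSucc_eq_ite] at this
  split_ifs at this <;> omega

theorem finPred_ne_self (hn : 2 ≤ n) (i : Fin n) : finPred i ≠ i := fun h =>
  finSucc_ne_self hn i (by rw [← h, finSucc_finPred, h])

theorem finSucc_ne_finPred (hn : 3 ≤ n) (i : Fin n) : finSucc i ≠ finPred i := by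
  intro h
  have := congrArg (fun j => (finSucc j : ℕ)) h
  simp only [finSucc_finPred, val_finSucc_eq_ite] at this
  split_ifs at this <;> omega

/-- The closed neighbourhood of `uᵢ = (i, false)` in the sunlet, laid out as a star. -/
def closedStar (i : Fin n) : Fin 1 ⊕ Fin 3 → Fin n × Bool :=
  Sum.elim (fun _ => (i, false)) ![(i, true), (finSucc i, false), (finPred i, false)]

theorem closedStar_injective (hn : 3 ≤ n) (i : Fin n) : Function.Injective (closedStar i) := by
  have h₁ := finSucc_ne_self (by omega) i
  have h₂ := finPred_ne_self (by omega) i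
  have h₃ := finSucc_ne_finPred hn i
  intro a b h
  fin_cases a <;> fin_cases b <;> simp [closedStar] at h ⊢ <;> grind

theorem sunlet_adj_closedStar (hn : 3 ≤ n) (i : Fin n) (k : Fin 3) :
    (sunlet n).Adj (closedStar i (.inl 0)) (closedStar i (.inr k)) := by
  refine (SimpleGraph.fromRel_adj _ _ _).2 ⟨(closedStar_injective hn i).ne Sum.inl_ne_inr, ?_⟩
  fin_cases k
  · exact .inl (.inr ⟨rfl, rfl, rfl⟩)
  · exact .inl (.inl ⟨rfl, rfl, val_finSucc i⟩)
  · exact .inr (.inl ⟨rfl, rfl, by simp [closedStar, ← val_finSucc, finSucc_finPred]⟩)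

def closedStarHom (hn : 3 ≤ n) (i : Fin n) : _root_.starGraph 3 →g sunlet n where
  toFun := closedStar i
  map_rel' {a b} h := by
    rcases a with a | a <;> rcases b with b | b
    · simp [_root_.starGraph] at h
    · exact Subsingleton.elim a 0 ▸ sunlet_adj_closedStar hn i b
    · exact (Subsingleton.elim b 0 ▸ sunlet_adj_closedStar hn i a).symm
    · simp [_root_.starGraph] at h

def closedStarEmbedding (hn : 3 ≤ n) (i : Fin n) (m : ℕ) :
    (Fin 1 ⊕ Fin 3) × (Fin 1 ⊕ Fin m) ↪ (Fin n × Bool) × (Fin 1 ⊕ Fin m) :=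
  ⟨Prod.map (closedStar i) id, (closedStar_injective hn i).prodMap Function.injective_id⟩

end Sunlet

def closedStarEdges (n m : ℕ) (i : Fin n) : Set (Sym2 ((Fin n × Bool) × (Fin 1 ⊕ Fin m))) :=
  aSet n m i ∪ bSet n m i ∪ bpSet n m i ∪ cSet n m i ∪
    tSet n m i ∪ tSet n m (finSucc i) ∪ tSet n m (finPred i)

section ClosedStarEdges

variable {n : ℕ} (m : ℕ) (i : Fin n)

theorem rung_mem_closedStarEdges (k : Fin 3) (v : Fin 1 ⊕ Fin m) :
    s((closedStar i (.inl 0), v), (closedStar i (.inr k), v)) ∈ closedStarEdges n m i := by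
  fin_cases k
  exacts [.inl (.inl (.inl (.inl (.inl (.inr ⟨v, rfl⟩))))),
    .inl (.inl (.inl (.inl (.inl (.inl ⟨v, rfl⟩))))), .inl (.inl (.inl (.inr ⟨v, rfl⟩)))]

theorem spoke_mem_closedStarEdges (a : Fin 1 ⊕ Fin 3) (j : Fin m) :
    s((closedStar i a, .inl 0), (closedStar i a, .inr j)) ∈ closedStarEdges n m i := by
  rcases a with a | a
  · exact .inl (.inl (.inr ⟨j, by rw [Subsingleton.elim a 0]; rfl⟩))
  · fin_cases a
    exacts [.inl (.inl (.inl (.inl (.inr ⟨j, rfl⟩)))), .inl (.inr ⟨j, rfl⟩), .inr ⟨j, rfl⟩]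

theorem closedStarEdges_eq_edgeSet_map (hn : 3 ≤ n) :
    closedStarEdges n m i =
      (((_root_.starGraph 3).boxProd (_root_.starGraph m)).map
        (closedStarEmbedding hn i m)).edgeSet := by
  rw [SimpleGraph.edgeSet_map]
  ext e
  constructor
  · rintro ((((((⟨v, rfl⟩ | ⟨v, rfl⟩) | ⟨j, rfl⟩) | ⟨v, rfl⟩) | ⟨j, rfl⟩) | ⟨j, rfl⟩) | ⟨j, rfl⟩)
    · exact ⟨s((.inl 0, v), (.inr 1, v)), by simp [_root_.starGraph], rfl⟩
    · exact ⟨s((.inl 0, v), (.inr 0, v)), by simp [_root_.starGraph], rfl⟩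
    · exact ⟨s((.inr 0, .inl 0), (.inr 0, .inr j)), by simp [_root_.starGraph], rfl⟩
    · exact ⟨s((.inl 0, v), (.inr 2, v)), by simp [_root_.starGraph], rfl⟩
    · exact ⟨s((.inl 0, .inl 0), (.inl 0, .inr j)), by simp [_root_.starGraph], rfl⟩
    · exact ⟨s((.inr 1, .inl 0), (.inr 1, .inr j)), by simp [_root_.starGraph], rfl⟩
    · exact ⟨s((.inr 2, .inl 0), (.inr 2, .inr j)), by simp [_root_.starGraph], rfl⟩
  · rintro ⟨e, he, rfl⟩
    induction e using Sym2.ind with | _ x y => ?_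
    obtain ⟨a, v⟩ := x
    obtain ⟨b, w⟩ := y
    rcases SimpleGraph.boxProd_adj.1 he with ⟨h, rfl : v = w⟩ | ⟨h, rfl : a = b⟩
    · obtain ⟨k, hk⟩ := starGraph_adj_iff.1 h
      change Sym2.map _ (Sym2.map (·, v) s(a, b)) ∈ _
      rw [hk]
      exact rung_mem_closedStarEdges m i k v
    · obtain ⟨j, hj⟩ := starGraph_adj_iff.1 h
      change Sym2.map _ (Sym2.map (a, ·) s(v, w)) ∈ _
      rw [hj]
      exact spoke_mem_closedStarEdges m i a j

theorem fromEdgeSet_closedStarEdges (hn : 3 ≤ n) :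
    SimpleGraph.fromEdgeSet (closedStarEdges n m i) =
      ((_root_.starGraph 3).boxProd (_root_.starGraph m)).map (closedStarEmbedding hn i m) := by
  rw [closedStarEdges_eq_edgeSet_map m i hn, SimpleGraph.fromEdgeSet_edgeSet]

theorem map_closedStarEmbedding_le (hn : 3 ≤ n) :
    ((_root_.starGraph 3).boxProd (_root_.starGraph m)).map (closedStarEmbedding hn i m) ≤
      (sunlet n).boxProd (_root_.starGraph m) :=
  (SimpleGraph.map_le_iff_le_comap _ _ _).2
    ((closedStarHom hn i).boxProdMap SimpleGraph.Hom.id).le_comap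

end ClosedStarEdges

theorem stmt12 (n : ℕ) (hn : 3 ≤ n) (i : Fin n) :
    let E := aSet n 3 i ∪ bSet n 3 i ∪ bpSet n 3 i ∪ cSet n 3 i ∪
      tSet n 3 i ∪ tSet n 3 (finSucc i) ∪ tSet n 3 (finPred i)
    let H := SimpleGraph.fromEdgeSet E
    H ≤ (sunlet n).boxProd (_root_.starGraph 3) ∧
    Homeo ⟨↥H.support, H.induce H.support⟩
      ⟨(i : Fin 3) × ![Fin 1, Fin 3, Fin 3] i,
        SimpleGraph.completeMultipartiteGraph ![Fin 1, Fin 3, Fin 3]⟩ := by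
  intro E H
  have hH : H = ((_root_.starGraph 3).boxProd (_root_.starGraph 3)).map
      (closedStarEmbedding hn i 3) :=
    fromEdgeSet_closedStarEdges 3 i hn
  obtain ⟨e⟩ := SimpleGraph.nonempty_induce_support_map_iso (closedStarEmbedding hn i 3)
    (SimpleGraph.support_boxProd_eq_univ (H := _root_.starGraph 3) (support_starGraph three_pos))
  rw [hH]
  exact ⟨map_closedStarEmbedding_le 3 i hn, (Homeo.of_iso e).trans (homeo_boxProd_starGraph 3 3)⟩
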